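/- Let A ∈ ℝ^{n×d} (n, d ≥ 1), b ∈ ℝ^n, λ > 0 and q > 0. Define Ψ_q : ℝ → ℝ by Ψ_q(x) = (k + 1/2)·q·(|x| − kq) + k²q²/2 with k = ⌊|x|/q⌋, and define F_PAR(x) = (1/(2n))‖Ax − b‖² + λ Σ_{i=1}^d Ψ_q(x_i) and F_ridge(x) = (1/(2n))‖Ax − b‖² + (λ/2)‖x‖². Let x_PAR be a global minimizer of F_PAR and let x_ridge be a global minimizer of F_ridge. Then ‖x_PAR − x_ridge‖ ≤ √(d/2)·q and ‖x_PAR − x_ridge‖_Σ̂ ≤ √(dλ/2)·q, where ‖v‖_Σ̂ := √((1/n)‖Av‖²) is the Mahalanobis seminorm associated with the sample covariance matrix Σ̂ = (1/n)AᵀA. -/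

import Mathlib

/-! On each grid cell `[kq, (k+1)q]` the regularizer `Ψ_q` is the chord of `x²/2`, so
`Ψ_q(x) - x²/2 = r(q - r)/2 ∈ [0, q²/8]` with `r = |x| - kq`. Hence
`F_ridge ≤ F_PAR ≤ F_ridge + λdq²/8`, and the PAR minimizer is a `λdq²/8`-minimizer of
`F_ridge`. Since `F_ridge` is quadratic, comparing its value at the midpoint of `x_PAR` and
`x_ridge` with its minimum gives, for `Δ = x_PAR - x_ridge`,
`(1/(2n))‖AΔ‖² + (λ/2)‖Δ‖² ≤ 2(F_ridge(x_PAR) - F_ridge(x_ridge))`, and both bounds follow. -/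

/-- The piecewise-affine regularizer with quantization values `Q = {0, ±q, ±2q, …}`
that interpolates the quadratic `x²/2` at the grid points: with `k = ⌊|x|/q⌋`,
`Ψ_q(x) = (k + 1/2)·q·(|x| − kq) + k²q²/2`. -/
noncomputable def quadPAR (q : ℝ) (x : ℝ) : ℝ :=
  ((⌊|x| / q⌋₊ : ℝ) + 1 / 2) * q * (|x| - (⌊|x| / q⌋₊ : ℝ) * q) +
    (⌊|x| / q⌋₊ : ℝ) ^ 2 * q ^ 2 / 2

open Finset Matrix

lemma quadPAR_sub_sq_div_two (q x : ℝ) :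
    quadPAR q x - x ^ 2 / 2 =
      (|x| - ⌊|x| / q⌋₊ * q) * (q - (|x| - ⌊|x| / q⌋₊ * q)) / 2 := by
  rw [quadPAR, ← sq_abs x]
  ring

lemma quadPAR_le (q x : ℝ) : quadPAR q x ≤ x ^ 2 / 2 + q ^ 2 / 8 := by
  have := quadPAR_sub_sq_div_two q x
  nlinarith [sq_nonneg (q - 2 * (|x| - ⌊|x| / q⌋₊ * q))]

lemma sq_div_two_le_quadPAR {q : ℝ} (hq : 0 < q) (x : ℝ) : x ^ 2 / 2 ≤ quadPAR q x := by
  have hx : 0 ≤ |x| / q := by positivity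
  have hlow : ⌊|x| / q⌋₊ * q ≤ |x| := (le_div_iff₀ hq).1 (Nat.floor_le hx)
  have hhigh : |x| < (⌊|x| / q⌋₊ + 1) * q := (div_lt_iff₀ hq).1 (Nat.lt_floor_add_one _)
  have := quadPAR_sub_sq_div_two q x
  nlinarith [mul_nonneg (sub_nonneg.2 hlow) (sub_nonneg.2 hhigh.le)]

lemma sum_sq_midpoint_sub {κ : Type*} [Fintype κ] (u v w : κ → ℝ) :
    ∑ i, (midpoint ℝ u v - w) i ^ 2 =
      (∑ i, (u - w) i ^ 2 + ∑ i, (v - w) i ^ 2) / 2 - (∑ i, (u - v) i ^ 2) / 4 := by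
  rw [← sum_add_distrib, sum_div, sum_div, ← sum_sub_distrib]
  refine sum_congr rfl fun i _ => ?_
  simp only [midpoint_eq_smul_add, invOf_eq_inv, Pi.sub_apply, Pi.smul_apply, Pi.add_apply,
    smul_eq_mul]
  ring

section Ridge

variable {m ι : Type*} [Fintype m] [Fintype ι]

def ridgeObjective (A : Matrix m ι ℝ) (b : m → ℝ) (c μ : ℝ) (x : ι → ℝ) : ℝ :=
  c * ∑ i, (A *ᵥ x - b) i ^ 2 + μ * ∑ j, x j ^ 2

noncomputable def parObjective (A : Matrix m ι ℝ) (b : m → ℝ) (c lam q : ℝ) (x : ι → ℝ) :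
    ℝ :=
  c * ∑ i, (A *ᵥ x - b) i ^ 2 + lam * ∑ j, quadPAR q (x j)

variable (A : Matrix m ι ℝ) (b : m → ℝ) (c μ : ℝ)

lemma ridgeObjective_midpoint (x y : ι → ℝ) :
    ridgeObjective A b c μ (midpoint ℝ x y) =
      (ridgeObjective A b c μ x + ridgeObjective A b c μ y) / 2 -
        ridgeObjective A 0 c μ (x - y) / 4 := by
  have hA : A *ᵥ midpoint ℝ x y = midpoint ℝ (A *ᵥ x) (A *ᵥ y) := by
    simp only [midpoint_eq_smul_add, mulVec_smul, mulVec_add]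
  have hloss := sum_sq_midpoint_sub (A *ᵥ x) (A *ᵥ y) b
  have hpen := sum_sq_midpoint_sub x y 0
  simp only [sub_zero] at hpen
  simp only [ridgeObjective, hA, mulVec_sub, sub_zero, hloss, hpen]
  ring

lemma ridgeObjective_sub_le_of_forall_le {y : ι → ℝ}
    (hy : ∀ z, ridgeObjective A b c μ y ≤ ridgeObjective A b c μ z) (x : ι → ℝ) :
    ridgeObjective A 0 c μ (x - y) ≤
      2 * (ridgeObjective A b c μ x - ridgeObjective A b c μ y) := by
  have := hy (midpoint ℝ x y)
  rw [ridgeObjective_midpoint] at this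
  linarith

variable {c} {lam : ℝ} (x : ι → ℝ)

lemma parObjective_le_ridgeObjective_add (hlam : 0 ≤ lam) (q : ℝ) :
    parObjective A b c lam q x ≤
      ridgeObjective A b c (lam / 2) x + lam * (Fintype.card ι * q ^ 2 / 8) := by
  have h : ∑ j, quadPAR q (x j) ≤ (∑ j, x j ^ 2) / 2 + Fintype.card ι * q ^ 2 / 8 := by
    calc ∑ j, quadPAR q (x j) ≤ ∑ j, (x j ^ 2 / 2 + q ^ 2 / 8) :=
          sum_le_sum fun j _ => quadPAR_le q (x j)
      _ = _ := by rw [sum_add_distrib, ← sum_div, sum_const, card_univ, nsmul_eq_mul]; ring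
  unfold parObjective ridgeObjective
  linarith [mul_le_mul_of_nonneg_left h hlam]

lemma ridgeObjective_le_parObjective (hlam : 0 ≤ lam) {q : ℝ} (hq : 0 < q) :
    ridgeObjective A b c (lam / 2) x ≤ parObjective A b c lam q x := by
  have h : (∑ j, x j ^ 2) / 2 ≤ ∑ j, quadPAR q (x j) := by
    rw [sum_div]
    exact sum_le_sum fun j _ => sq_div_two_le_quadPAR hq (x j)
  unfold parObjective ridgeObjective
  linarith [mul_le_mul_of_nonneg_left h hlam]

end Ridge

lemma sqrt_le_sqrt_mul_of_le_mul_sq {x K q : ℝ} (hq : 0 ≤ q) (h : x ≤ K * q ^ 2) :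
    √x ≤ √K * q := by
  rw [← Real.sqrt_sq hq, ← Real.sqrt_mul' _ (sq_nonneg q)]
  exact Real.sqrt_le_sqrt h

theorem par_close_to_ridge_general
    (n d : ℕ)
    (A : Matrix (Fin n) (Fin d) ℝ) (b : Fin n → ℝ)
    (lam : ℝ) (hlam : 0 < lam) (q : ℝ) (hq : 0 < q)
    (FPAR Fridge : (Fin d → ℝ) → ℝ)
    (hFPAR : ∀ x, FPAR x =
      (1 / (2 * n)) * ∑ i, (A.mulVec x i - b i) ^ 2 + lam * ∑ i, quadPAR q (x i))
    (hFridge : ∀ x, Fridge x =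
      (1 / (2 * n)) * ∑ i, (A.mulVec x i - b i) ^ 2 + (lam / 2) * ∑ i, (x i) ^ 2)
    (xPAR : Fin d → ℝ) (hxPAR : ∀ y, FPAR xPAR ≤ FPAR y)
    (xridge : Fin d → ℝ) (hxridge : ∀ y, Fridge xridge ≤ Fridge y) :
    Real.sqrt (∑ i, (xPAR i - xridge i) ^ 2) ≤ Real.sqrt ((d : ℝ) / 2) * q ∧
    Real.sqrt ((1 / n) * ∑ i, (A.mulVec (xPAR - xridge) i) ^ 2) ≤
      Real.sqrt ((d : ℝ) * lam / 2) * q := by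
  obtain rfl : FPAR = parObjective A b (1 / (2 * n)) lam q := funext hFPAR
  obtain rfl : Fridge = ridgeObjective A b (1 / (2 * n)) (lam / 2) := funext hFridge
  have hgap : ridgeObjective A b (1 / (2 * n)) (lam / 2) xPAR ≤
      ridgeObjective A b (1 / (2 * n)) (lam / 2) xridge + lam * (d * q ^ 2 / 8) := by
    calc _ ≤ parObjective A b (1 / (2 * n)) lam q xPAR :=
          ridgeObjective_le_parObjective A b xPAR hlam.le hq
      _ ≤ parObjective A b (1 / (2 * n)) lam q xridge := hxPAR xridge
      _ ≤ _ := by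
          simpa only [Fintype.card_fin] using
            parObjective_le_ridgeObjective_add A b xridge hlam.le q
  have hkey : ridgeObjective A 0 (1 / (2 * n)) (lam / 2) (xPAR - xridge) ≤
      lam * d * q ^ 2 / 4 := by
    linarith [ridgeObjective_sub_le_of_forall_le A b _ _ hxridge xPAR]
  simp only [ridgeObjective, Pi.sub_apply, Pi.zero_apply, sub_zero] at hkey
  have hscale : 1 / (n : ℝ) * ∑ i, (A *ᵥ (xPAR - xridge)) i ^ 2 =
      2 * (1 / (2 * n) * ∑ i, (A *ᵥ (xPAR - xridge)) i ^ 2) := by ring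
  have hfit_nonneg : 0 ≤ 1 / (2 * n : ℝ) * ∑ i, (A *ᵥ (xPAR - xridge)) i ^ 2 := by
    positivity
  have hdist_nonneg : 0 ≤ ∑ i, (xPAR i - xridge i) ^ 2 := by positivity
  constructor
  · apply sqrt_le_sqrt_mul_of_le_mul_sq hq.le
    nlinarith
  · apply sqrt_le_sqrt_mul_of_le_mul_sq hq.le
    nlinarith

/-- Theorem 4.1: the PAR-regularized least-squares solution is close to
the ridge solution, both in Euclidean norm and in the Mahalanobis seminorm
`‖v‖_Σ̂ = √((1/n)‖Av‖²)` associated with the sample covariance `Σ̂ = (1/n)AᵀA`,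
with both bounds proportional to the quantization gap `q`. -/
theorem par_close_to_ridge
    (n d : ℕ) (hn : 0 < n) (hd : 0 < d)
    (A : Matrix (Fin n) (Fin d) ℝ) (b : Fin n → ℝ)
    (lam : ℝ) (hlam : 0 < lam) (q : ℝ) (hq : 0 < q)
    (FPAR Fridge : (Fin d → ℝ) → ℝ)
    (hFPAR : ∀ x, FPAR x =
      (1 / (2 * n)) * ∑ i, (A.mulVec x i - b i) ^ 2 + lam * ∑ i, quadPAR q (x i))
    (hFridge : ∀ x, Fridge x =
      (1 / (2 * n)) * ∑ i, (A.mulVec x i - b i) ^ 2 + (lam / 2) * ∑ i, (x i) ^ 2)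
    (xPAR : Fin d → ℝ) (hxPAR : ∀ y, FPAR xPAR ≤ FPAR y)
    (xridge : Fin d → ℝ) (hxridge : ∀ y, Fridge xridge ≤ Fridge y) :
    Real.sqrt (∑ i, (xPAR i - xridge i) ^ 2) ≤ Real.sqrt ((d : ℝ) / 2) * q ∧
    Real.sqrt ((1 / n) * ∑ i, (A.mulVec (xPAR - xridge) i) ^ 2) ≤
      Real.sqrt ((d : ℝ) * lam / 2) * q :=
  par_close_to_ridge_general n d A b lam hlam q hq FPAR Fridge hFPAR hFridge xPAR hxPAR xridge
    hxridge
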